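/- Let n ≥ 3, k ∈ {1,...,n−1} with k ≠ n/2, and let μ = 4·sin²(kπ/n). If G' is obtained from a graph G containing an induced path of n internal vertices, each of degree 2 in G, connecting vertices v and u, by replacing this path by a single edge {v,u}, then the multiplicity of μ as a Laplacian eigenvalue of G equals the multiplicity of μ as a Laplacian eigenvalue of G'. -/

import Mathlib

/-!
Write `μ = 2 - 2 cos θ` with `θ = 2kπ/n`. Along the path `v, p₁, …, pₙ, u` the eigen-equations
of `L(G)` at the path vertices say that the values `q₀, …, qₙ₊₁` satisfy
`qₜ + qₜ₊₂ = 2 cos θ · qₜ₊₁`, whose solutions are `α cos tθ + β sin tθ`. Since `sin θ ≠ 0`, a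
solution is determined by `q₀, q₁`, and since `nθ ∈ 2πℤ` it is `n`-periodic: `pₙ` carries the
value of `v` and `p₁` that of `u`. So the equations of `L(G)` at `v` and `u` are those of
`L(G')`, where `p₁` and `pₙ` are replaced by the edge `{v, u}`, and restriction to the old
vertices is an isomorphism of the `μ`-eigenspaces, inverted by the trigonometric extension
along the path.
-/

open Matrix SimpleGraph Real

noncomputable def mult {m : Type*} [Fintype m] [DecidableEq m]
    (M : Matrix m m ℝ) (μ : ℝ) : ℕ :=
  Module.finrank ℝ (Module.End.eigenspace (Matrix.toLin' M) μ)

section Recurrence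

variable {n : ℕ} {θ : ℝ}

noncomputable def trigSeq (α β θ : ℝ) (t : ℕ) : ℝ :=
  α * cos (t * θ) + β * sin (t * θ)

variable {α β : ℝ}

@[simp] lemma trigSeq_zero : trigSeq α β θ 0 = α := by
  simp [trigSeq]

lemma trigSeq_one : trigSeq α β θ 1 = α * cos θ + β * sin θ := by
  simp [trigSeq]

lemma trigSeq_add_trigSeq_add_two (t : ℕ) :
    trigSeq α β θ t + trigSeq α β θ (t + 2) = 2 * cos θ * trigSeq α β θ (t + 1) := by
  have h₀ : (t : ℝ) * θ = (t + 1 : ℕ) * θ - θ := by push_cast; ring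
  have h₂ : ((t + 2 : ℕ) : ℝ) * θ = (t + 1 : ℕ) * θ + θ := by push_cast; ring
  simp only [trigSeq, h₀, h₂, cos_add, sin_add, cos_sub, sin_sub]
  ring

lemma trigSeq_add_period {k : ℕ} (hper : (n : ℝ) * θ = k * (2 * π)) (t : ℕ) :
    trigSeq α β θ (t + n) = trigSeq α β θ t := by
  have h : ((t + n : ℕ) : ℝ) * θ = t * θ + k * (2 * π) := by push_cast; rw [← hper]; ring
  simp only [trigSeq, h, cos_add_nat_mul_two_pi, sin_add_nat_mul_two_pi]

lemma eqOn_of_recurrence {q r : ℕ → ℝ} (c : ℝ)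
    (hq : ∀ t < n, q t + q (t + 2) = c * q (t + 1))
    (hr : ∀ t < n, r t + r (t + 2) = c * r (t + 1)) (h₀ : q 0 = r 0) (h₁ : q 1 = r 1) :
    ∀ t ≤ n + 1, q t = r t := by
  intro t
  induction t using Nat.strong_induction_on with
  | _ t ih =>
    match t with
    | 0 => exact fun _ => h₀
    | 1 => exact fun _ => h₁
    | s + 2 =>
      intro hs
      have hq' := hq s (by omega)
      have hr' := hr s (by omega)
      rw [ih s (by omega) (by omega), ih (s + 1) (by omega) (by omega)] at hq'
      linarith

lemma exists_eqOn_trigSeq_of_recurrence (hs : sin θ ≠ 0) {q : ℕ → ℝ}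
    (hq : ∀ t < n, q t + q (t + 2) = 2 * cos θ * q (t + 1)) :
    ∃ α β, ∀ t ≤ n + 1, q t = trigSeq α β θ t := by
  refine ⟨q 0, (q 1 - q 0 * cos θ) / sin θ, eqOn_of_recurrence _ hq
    (fun t _ ↦ trigSeq_add_trigSeq_add_two t) trigSeq_zero.symm ?_⟩
  rw [trigSeq_one]
  field_simp
  ring

lemma periodic_of_recurrence {k : ℕ} (hs : sin θ ≠ 0) (hper : (n : ℝ) * θ = k * (2 * π))
    {q : ℕ → ℝ} (hq : ∀ t < n, q t + q (t + 2) = 2 * cos θ * q (t + 1)) :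
    q n = q 0 ∧ q (n + 1) = q 1 := by
  obtain ⟨α, β, h⟩ := exists_eqOn_trigSeq_of_recurrence hs hq
  rw [h n le_self_add, h 0 (Nat.zero_le _), h (n + 1) le_rfl, h 1 (by omega),
    ← trigSeq_add_period hper 0, ← trigSeq_add_period hper 1, zero_add, add_comm 1]
  exact ⟨rfl, rfl⟩

end Recurrence

section Laplacian

variable {V : Type*} [Fintype V] [DecidableEq V] (H : SimpleGraph V) [DecidableRel H.Adj]
  (x : V → ℝ) (w : V)

lemma lapMatrix_mulVec_apply_eq_sum :
    (H.lapMatrix ℝ *ᵥ x) w = ∑ b ∈ H.neighborFinset w, (x w - x b) := by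
  rw [lapMatrix_mulVec_apply, Finset.sum_sub_distrib, Finset.sum_const,
    card_neighborFinset_eq_degree, nsmul_eq_mul]

lemma lapMatrix_mulVec_apply_eq_sum_ite :
    (H.lapMatrix ℝ *ᵥ x) w = ∑ b, if H.Adj w b then x w - x b else 0 := by
  rw [lapMatrix_mulVec_apply_eq_sum, neighborFinset_eq_filter, Finset.sum_filter]

end Laplacian

namespace SimpleGraph

variable {α : Type*} {n : ℕ}

/-- `G` arises from `G'` by subdividing its edge `{v, u}` into a path `v, 0, 1, …, n - 1, u`
through the new vertices `Fin n`. -/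
structure IsEdgeSubdivision (G : SimpleGraph (α ⊕ Fin n)) (G' : SimpleGraph α) (u v : α) : Prop where
  ne : u ≠ v
  not_adj : ¬ G.Adj (Sum.inl u) (Sum.inl v)
  adj_inr_inr : ∀ i j : Fin n, G.Adj (Sum.inr i) (Sum.inr j) ↔ ((i : ℕ) + 1 = j ∨ (j : ℕ) + 1 = i)
  adj_inl_inr : ∀ (a : α) (i : Fin n), G.Adj (Sum.inl a) (Sum.inr i) ↔
    ((a = v ∧ (i : ℕ) = 0) ∨ (a = u ∧ (i : ℕ) = n - 1))
  adj' : ∀ a b : α, G'.Adj a b ↔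
    (G.Adj (Sum.inl a) (Sum.inl b) ∨ (a = v ∧ b = u) ∨ (a = u ∧ b = v))

def pathVertex (u v : α) (n : ℕ) : ℕ → α ⊕ Fin n
  | 0 => Sum.inl v
  | t + 1 => if h : t < n then Sum.inr ⟨t, h⟩ else Sum.inl u

variable {u v : α}

@[simp] lemma pathVertex_zero : pathVertex u v n 0 = Sum.inl v := rfl

@[simp] lemma pathVertex_succ (i : Fin n) : pathVertex u v n (i + 1) = Sum.inr i := by
  simp [pathVertex]

lemma pathVertex_one (hn : 0 < n) : pathVertex u v n 1 = Sum.inr ⟨0, hn⟩ := by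
  simp [pathVertex, hn]

lemma pathVertex_self (hn : 0 < n) : pathVertex u v n n = Sum.inr ⟨n - 1, by omega⟩ := by
  obtain ⟨m, rfl⟩ := Nat.exists_eq_add_of_lt hn
  simp [pathVertex]

@[simp] lemma pathVertex_add_one_self : pathVertex u v n (n + 1) = Sum.inl u := by
  simp [pathVertex]

variable {G : SimpleGraph (α ⊕ Fin n)} {G' : SimpleGraph α}

lemma IsEdgeSubdivision.pathVertex_ne (hG : IsEdgeSubdivision G G' u v) {t : ℕ} (ht : t < n) :
    pathVertex u v n t ≠ pathVertex u v n (t + 2) := by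
  rcases t with _ | t <;> simp only [pathVertex] <;> split_ifs <;> grind [hG.ne]

variable [DecidableEq α] [DecidableRel G.Adj]

lemma IsEdgeSubdivision.sum_ite_adj_inl_inr (hG : IsEdgeSubdivision G G' u v) (hn : 0 < n)
    (a : α) (f : Fin n → ℝ) :
    ∑ i, (if G.Adj (Sum.inl a) (Sum.inr i) then f i else 0) =
      (if a = v then f ⟨0, hn⟩ else 0) + (if a = u then f ⟨n - 1, by omega⟩ else 0) := by
  have hsplit : ∀ i, (if G.Adj (Sum.inl a) (Sum.inr i) then f i else 0) =
      (if i = ⟨0, hn⟩ then (if a = v then f i else 0) else 0) +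
        (if i = ⟨n - 1, by omega⟩ then (if a = u then f i else 0) else 0) := by
    intro i
    simp only [hG.adj_inl_inr, Fin.ext_iff]
    split_ifs <;> grind [hG.ne]
  simp only [hsplit, Finset.sum_add_distrib, Finset.sum_ite_eq', Finset.mem_univ, if_true]

variable [Fintype α]

lemma IsEdgeSubdivision.neighborFinset_inr (hG : IsEdgeSubdivision G G' u v) (i : Fin n) :
    G.neighborFinset (Sum.inr i) = {pathVertex u v n i, pathVertex u v n (i + 2)} := by
  obtain ⟨_ | i, hi⟩ := i <;> ext (a | j) <;>
    simp only [mem_neighborFinset, G.adj_comm _ (Sum.inl _), hG.adj_inl_inr, hG.adj_inr_inr,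
      pathVertex, Finset.mem_insert, Finset.mem_singleton] <;>
    split_ifs <;> simp [Fin.ext_iff] <;> grind

lemma IsEdgeSubdivision.lapMatrix_mulVec_inr (hG : IsEdgeSubdivision G G' u v)
    (x : α ⊕ Fin n → ℝ) (i : Fin n) :
    (G.lapMatrix ℝ *ᵥ x) (Sum.inr i) =
      2 * x (Sum.inr i) - x (pathVertex u v n i) - x (pathVertex u v n (i + 2)) := by
  rw [lapMatrix_mulVec_apply_eq_sum, hG.neighborFinset_inr, Finset.sum_pair (hG.pathVertex_ne i.2)]
  ring

variable [DecidableRel G'.Adj]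

lemma IsEdgeSubdivision.sum_ite_adj' (hG : IsEdgeSubdivision G G' u v) (a : α) (f : α → ℝ) :
    ∑ b, (if G'.Adj a b then f b else 0) =
      ∑ b, (if G.Adj (Sum.inl a) (Sum.inl b) then f b else 0) +
        (if a = v then f u else 0) + (if a = u then f v else 0) := by
  have hsplit : ∀ b, (if G'.Adj a b then f b else 0) =
      (if G.Adj (Sum.inl a) (Sum.inl b) then f b else 0) +
        (if b = u then (if a = v then f b else 0) else 0) +
        (if b = v then (if a = u then f b else 0) else 0) := by
    intro b
    simp only [hG.adj']
    split_ifs <;> grind [hG.ne, hG.not_adj, G.adj_comm (Sum.inl u) (Sum.inl v)]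
  simp only [hsplit, Finset.sum_add_distrib, Finset.sum_ite_eq', Finset.mem_univ, if_true]

lemma IsEdgeSubdivision.lapMatrix_mulVec_inl (hG : IsEdgeSubdivision G G' u v) (hn : 0 < n)
    (x : α ⊕ Fin n → ℝ) (a : α) :
    (G.lapMatrix ℝ *ᵥ x) (Sum.inl a) = (G'.lapMatrix ℝ *ᵥ (x ∘ Sum.inl)) a +
      (if a = v then x (Sum.inl u) - x (pathVertex u v n 1) else 0) +
      (if a = u then x (Sum.inl v) - x (pathVertex u v n n) else 0) := by
  rw [lapMatrix_mulVec_apply_eq_sum_ite, lapMatrix_mulVec_apply_eq_sum_ite, Fintype.sum_sum_type,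
    hG.sum_ite_adj_inl_inr hn, hG.sum_ite_adj', pathVertex_one hn, pathVertex_self hn]
  split_ifs <;> simp <;> ring

section Eigenspace

variable {k : ℕ} {θ : ℝ}

local notation "E[" H ", " θ "]" => Module.End.eigenspace (toLin' (lapMatrix ℝ H)) (2 - 2 * cos θ)

lemma IsEdgeSubdivision.mem_eigenspace_iff (hG : IsEdgeSubdivision G G' u v) (hn : 0 < n)
    (hs : sin θ ≠ 0) (hper : (n : ℝ) * θ = k * (2 * π)) (x : α ⊕ Fin n → ℝ) :
    x ∈ E[G, θ] ↔
      (∀ t < n, x (pathVertex u v n t) + x (pathVertex u v n (t + 2)) =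
        2 * cos θ * x (pathVertex u v n (t + 1))) ∧ x ∘ Sum.inl ∈ E[G', θ] := by
  simp only [Module.End.mem_eigenspace_iff, toLin'_apply, funext_iff, Sum.forall, Pi.smul_apply,
    smul_eq_mul, Fin.forall_iff, and_comm (a := ∀ _ : α, _)]
  have hrow : ∀ t (ht : t < n), (G.lapMatrix ℝ *ᵥ x) (Sum.inr ⟨t, ht⟩) =
      (2 - 2 * cos θ) * x (Sum.inr ⟨t, ht⟩) ↔ x (pathVertex u v n t) +
        x (pathVertex u v n (t + 2)) = 2 * cos θ * x (pathVertex u v n (t + 1)) := by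
    intro t ht
    rw [hG.lapMatrix_mulVec_inr, ← pathVertex_succ (u := u) (v := v) ⟨t, ht⟩]
    constructor <;> intro h <;> linarith
  rw [forall₂_congr hrow]
  refine and_congr_right fun hrec ↦ forall_congr' fun a ↦ ?_
  obtain ⟨hv, hu⟩ := periodic_of_recurrence (q := fun t ↦ x (pathVertex u v n t)) hs hper hrec
  simp only [pathVertex_zero, pathVertex_add_one_self] at hv hu
  simp [hG.lapMatrix_mulVec_inl hn, hv, hu]

lemma IsEdgeSubdivision.eq_zero_of_mem_eigenspace (hG : IsEdgeSubdivision G G' u v) (hn : 0 < n)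
    (hs : sin θ ≠ 0) (hper : (n : ℝ) * θ = k * (2 * π)) {x : α ⊕ Fin n → ℝ} (hx : x ∈ E[G, θ])
    (hx₀ : x ∘ Sum.inl = 0) : x = 0 := by
  have hrec := ((hG.mem_eigenspace_iff hn hs hper x).1 hx).1
  obtain ⟨-, hu⟩ := periodic_of_recurrence (q := fun t ↦ x (pathVertex u v n t)) hs hper hrec
  have hq := eqOn_of_recurrence (r := 0) _ hrec (fun _ _ ↦ by simp)
    (by simpa using congr_fun hx₀ v) (by simpa [← hu] using congr_fun hx₀ u)
  funext w
  rcases w with a | i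
  · exact congr_fun hx₀ a
  · simpa using hq (i + 1) (by omega)

lemma IsEdgeSubdivision.exists_mem_eigenspace_comp_inl_eq (hG : IsEdgeSubdivision G G' u v)
    (hn : 0 < n) (hs : sin θ ≠ 0) (hper : (n : ℝ) * θ = k * (2 * π)) {y : α → ℝ}
    (hy : y ∈ E[G', θ]) : ∃ x ∈ E[G, θ], x ∘ Sum.inl = y := by
  set q := trigSeq (y v) ((y u - y v * cos θ) / sin θ) θ
  have hq₁ : q 1 = y u := by
    simp only [q, trigSeq_one]
    field_simp
    ring
  set x : α ⊕ Fin n → ℝ := Sum.elim y fun i ↦ q (i + 1)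
  have hxq : ∀ t ≤ n + 1, x (pathVertex u v n t) = q t := by
    rintro (_ | t) ht
    · simp [x, q]
    · obtain ht | rfl := Nat.lt_or_eq_of_le (Nat.le_of_succ_le_succ ht)
      · rw [show t + 1 = (⟨t, ht⟩ : Fin n) + 1 from rfl, pathVertex_succ]
        rfl
      · rw [pathVertex_add_one_self, add_comm]
        exact hq₁.symm.trans (trigSeq_add_period hper 1).symm
  refine ⟨x, (hG.mem_eigenspace_iff hn hs hper x).2 ⟨fun t ht ↦ ?_, hy⟩, rfl⟩
  rw [hxq t (by omega), hxq (t + 1) (by omega), hxq (t + 2) (by omega)]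
  exact trigSeq_add_trigSeq_add_two t

theorem IsEdgeSubdivision.mult_lapMatrix_eq (hG : IsEdgeSubdivision G G' u v) (hn : 0 < n)
    (hs : sin θ ≠ 0) (hper : (n : ℝ) * θ = k * (2 * π)) :
    mult (G.lapMatrix ℝ) (2 - 2 * cos θ) = mult (G'.lapMatrix ℝ) (2 - 2 * cos θ) := by
  let f : E[G, θ] →ₗ[ℝ] E[G', θ] := (LinearMap.funLeft ℝ ℝ Sum.inl).restrict
    fun x hx ↦ ((hG.mem_eigenspace_iff hn hs hper x).1 hx).2
  refine (LinearEquiv.ofBijective f ⟨?_, ?_⟩).finrank_eq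
  · rw [injective_iff_map_eq_zero]
    rintro ⟨x, hx⟩ h
    exact Subtype.ext (hG.eq_zero_of_mem_eigenspace hn hs hper hx (congr_arg Subtype.val h))
  · rintro ⟨y, hy⟩
    obtain ⟨x, hx, rfl⟩ := hG.exists_mem_eigenspace_comp_inl_eq hn hs hper hy
    exact ⟨⟨x, hx⟩, rfl⟩

end Eigenspace

end SimpleGraph

lemma sin_two_mul_nat_mul_pi_div_ne_zero {k n : ℕ} (hk : 0 < k) (hkn : k < n) (hk2 : 2 * k ≠ n) :
    sin (2 * k * π / n) ≠ 0 := by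
  rw [Ne, sin_eq_zero_iff]
  rintro ⟨z, hz⟩
  have hn : (n : ℝ) ≠ 0 := by exact_mod_cast (by omega : n ≠ 0)
  have hzn : (z : ℝ) * n = 2 * k :=
    calc (z : ℝ) * n = z * π * n / π := by field_simp
      _ = 2 * k := by rw [hz]; field_simp
  have hzn' : z * n = 2 * k := by exact_mod_cast hzn
  obtain rfl : z = 1 := by nlinarith
  omega

theorem stmt17_general {m n : ℕ} (k : ℕ) (hk1 : 1 ≤ k) (hkn : k ≤ n - 1)
    (hk2 : 2 * k ≠ n)
    (G : SimpleGraph (Fin m ⊕ Fin n)) [DecidableRel G.Adj]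
    (u v : Fin m) (huv : u ≠ v) (hnadj : ¬ G.Adj (Sum.inl u) (Sum.inl v))
    (hpath : ∀ i j : Fin n, G.Adj (Sum.inr i) (Sum.inr j) ↔
      ((i : ℕ) + 1 = j ∨ (j : ℕ) + 1 = i))
    (hcross : ∀ (a : Fin m) (i : Fin n), G.Adj (Sum.inl a) (Sum.inr i) ↔
      ((a = v ∧ (i : ℕ) = 0) ∨ (a = u ∧ (i : ℕ) = n - 1)))
    (G' : SimpleGraph (Fin m)) [DecidableRel G'.Adj]
    (hG' : ∀ a b : Fin m, G'.Adj a b ↔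
      (G.Adj (Sum.inl a) (Sum.inl b) ∨ (a = v ∧ b = u) ∨ (a = u ∧ b = v))) :
    mult (G.lapMatrix ℝ) (4 * Real.sin (k * Real.pi / n) ^ 2) =
      mult (G'.lapMatrix ℝ) (4 * Real.sin (k * Real.pi / n) ^ 2) := by
  have hμ : 4 * sin (k * π / n) ^ 2 = 2 - 2 * cos (2 * k * π / n) := by
    rw [sin_sq_eq_half_sub]
    ring_nf
  have hn : 0 < n := by omega
  have hper : (n : ℝ) * (2 * k * π / n) = k * (2 * π) := by
    field_simp
  rw [hμ]
  exact IsEdgeSubdivision.mult_lapMatrix_eq ⟨huv, hnadj, hpath, hcross, hG'⟩ hn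
    (sin_two_mul_nat_mul_pi_div_ne_zero hk1 (by omega) hk2) hper

/-- Replacing an induced path of `n` internal vertices of degree `2` (the `Fin n` part,
attached to `v` at one end and `u` at the other) by a single edge `{v, u}` does not change
the multiplicity of the Laplacian eigenvalue `4 sin²(kπ/n)`, for `1 ≤ k ≤ n-1`, `k ≠ n/2`. -/
theorem stmt17 {m n : ℕ} (hn : 3 ≤ n) (k : ℕ) (hk1 : 1 ≤ k) (hkn : k ≤ n - 1)
    (hk2 : 2 * k ≠ n)
    (G : SimpleGraph (Fin m ⊕ Fin n)) [DecidableRel G.Adj]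
    (u v : Fin m) (huv : u ≠ v) (hnadj : ¬ G.Adj (Sum.inl u) (Sum.inl v))
    (hpath : ∀ i j : Fin n, G.Adj (Sum.inr i) (Sum.inr j) ↔
      ((i : ℕ) + 1 = j ∨ (j : ℕ) + 1 = i))
    (hcross : ∀ (a : Fin m) (i : Fin n), G.Adj (Sum.inl a) (Sum.inr i) ↔
      ((a = v ∧ (i : ℕ) = 0) ∨ (a = u ∧ (i : ℕ) = n - 1)))
    (G' : SimpleGraph (Fin m)) [DecidableRel G'.Adj]
    (hG' : ∀ a b : Fin m, G'.Adj a b ↔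
      (G.Adj (Sum.inl a) (Sum.inl b) ∨ (a = v ∧ b = u) ∨ (a = u ∧ b = v))) :
    mult (G.lapMatrix ℝ) (4 * Real.sin (k * Real.pi / n) ^ 2) =
      mult (G'.lapMatrix ℝ) (4 * Real.sin (k * Real.pi / n) ^ 2) :=
  stmt17_general k hk1 hkn hk2 G u v huv hnadj hpath hcross G' hG'
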